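/- Let A₁, A₂ be self-adjoint operators on Hilbert spaces H₁, H₂, and s > 1/2. Suppose T is bounded from H₁ to H₂ and bounded from ⟨A₁⟩^{-s}H₁ to ⟨A₂⟩^{-s}H₂ (i.e. ⟨A₂⟩^s T ⟨A₁⟩^{-s} is bounded). Then T is bounded from B(A₁) to B(A₂), and there is a constant C = C(s) independent of T with ‖T‖_{B(B(A₁),B(A₂))} ≤ C(‖T‖_{B(H₁,H₂)} + ‖⟨A₂⟩^s T ⟨A₁⟩^{-s}‖_{B(H₁,H₂)}). -/

import Mathlib

open MeasureTheory Filter Topology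
open scoped ENNReal

noncomputable section

/-- The dyadic radii: `R_0 = 0`, `R_j = 2^(j-1)` for `j ≥ 1`
(here indexed so that `dyadicR (k+1) = 2^k`). -/
def dyadicR : ℕ → ℝ
  | 0 => 0
  | k + 1 => 2 ^ k

/-- For the self-adjoint multiplication operator by the real function `a` on `L²(μ)`,
the norm of the spectral block `F(R_k ≤ |A| < R_{k+1}) u`, i.e. of the restriction of
`u` to `{R_k ≤ |a| < R_{k+1}}`, valued in `ℝ≥0∞`. -/
def blockE {α : Type*} [MeasurableSpace α] (μ : Measure α) (a : α → ℝ) (u : α → ℂ)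
    (k : ℕ) : ℝ≥0∞ :=
  eLpNorm (Set.indicator {x | dyadicR k ≤ |a x| ∧ |a x| < dyadicR (k + 1)} u) 2 μ

/-- The Besov norm `‖u‖_{B(a)} = Σ_j R_j^{1/2} ‖F_j u‖` of the multiplication
operator by `a` on `L²(μ)`, valued in `ℝ≥0∞`; `u ∈ B(a)` iff this is finite. -/
def besovE {α : Type*} [MeasurableSpace α] (μ : Measure α) (a : α → ℝ) (u : α → ℂ) :
    ℝ≥0∞ :=
  ∑' k : ℕ, ENNReal.ofReal (Real.sqrt (dyadicR (k + 1))) * blockE μ a u k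

/-- The dual Besov norm `‖u‖_{B(a)*} = sup_j R_j^{-1/2} ‖F_j u‖`, valued in `ℝ≥0∞`. -/
def dualE {α : Type*} [MeasurableSpace α] (μ : Measure α) (a : α → ℝ) (u : α → ℂ) :
    ℝ≥0∞ :=
  ⨆ k : ℕ, (ENNReal.ofReal (Real.sqrt (dyadicR (k + 1))))⁻¹ * blockE μ a u k

/-!
Fix a dyadic block `k` of `T u` and split `u = v + w`, where `v` is the part of `u` on which
`|a₁| < R_k`. The high part `w` contributes at most `‖T‖ Σ_{j ≥ k} ‖F_j u‖`. On the `k`-th block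
`⟨a₂⟩ ^ s ≳ R_k ^ s`, so the low part contributes at most
`R_k ^ (-s) N ‖⟨a₁⟩ ^ s v‖ ≲ N Σ_{j < k} (R_{j+1} / R_k) ^ s ‖F_j u‖`.
Summing against the Besov weights `R_k ^ (1/2)` (a Schur test), the first kernel produces a
geometric series of ratio `2 ^ (-1/2)` and the second one a geometric series of ratio
`2 ^ (1/2 - s)`, which converges because `s > 1/2`.
-/

lemma dyadicR_mono : Monotone dyadicR := by
  refine monotone_nat_of_le_succ fun k => ?_
  cases k with
  | zero => simp [dyadicR]
  | succ k => simp only [dyadicR]; exact pow_le_pow_right₀ one_le_two k.le_succ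

lemma dyadicR_succ (k : ℕ) : dyadicR (k + 1) = 2 ^ k := rfl

lemma ofReal_sqrt_dyadicR_succ (k : ℕ) :
    ENNReal.ofReal (Real.sqrt (dyadicR (k + 1))) = (2 : ℝ≥0∞) ^ ((k : ℝ) / 2) := by
  rw [dyadicR_succ, Real.sqrt_eq_rpow, ← Real.rpow_natCast, ← Real.rpow_mul zero_le_two,
    ← ENNReal.ofReal_rpow_of_pos two_pos, ENNReal.ofReal_ofNat, mul_one_div]

section DyadicShell

variable {α : Type*}

def dyadicShell (a : α → ℝ) (k : ℕ) : Set α :=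
  {x | dyadicR k ≤ |a x| ∧ |a x| < dyadicR (k + 1)}

lemma exists_mem_dyadicShell (a : α → ℝ) (x : α) : ∃ k, x ∈ dyadicShell a k := by
  classical
  have hex : ∃ k, |a x| < dyadicR (k + 1) := pow_unbounded_of_one_lt _ one_lt_two
  refine ⟨Nat.find hex, ?_, Nat.find_spec hex⟩
  rcases hk : Nat.find hex with _ | k
  · exact abs_nonneg _
  · exact not_lt.1 (Nat.find_min hex (hk ▸ k.lt_succ_self))

lemma abs_lt_dyadicR_iff {a : α → ℝ} {x : α} {j : ℕ} (hx : x ∈ dyadicShell a j) (k : ℕ) :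
    |a x| < dyadicR k ↔ j < k := by
  refine ⟨fun h => ?_, fun h => hx.2.trans_le (dyadicR_mono h)⟩
  by_contra! hkj
  exact (hx.1.trans' (dyadicR_mono hkj)).not_gt h

lemma biUnion_Iio_dyadicShell (a : α → ℝ) (k : ℕ) :
    ⋃ j ∈ Set.Iio k, dyadicShell a j = {x | |a x| < dyadicR k} := by
  ext x
  obtain ⟨j, hj⟩ := exists_mem_dyadicShell a x
  simp only [Set.mem_iUnion, Set.mem_Iio, exists_prop]
  exact ⟨fun ⟨i, hik, hi⟩ => (abs_lt_dyadicR_iff hi k).2 hik,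
    fun h => ⟨j, (abs_lt_dyadicR_iff hj k).1 h, hj⟩⟩

lemma biUnion_Ici_dyadicShell (a : α → ℝ) (k : ℕ) :
    ⋃ j ∈ Set.Ici k, dyadicShell a j = {x | |a x| < dyadicR k}ᶜ := by
  ext x
  obtain ⟨j, hj⟩ := exists_mem_dyadicShell a x
  simp only [Set.mem_iUnion, Set.mem_Ici, Set.mem_compl_iff, exists_prop, ← not_lt]
  exact ⟨fun ⟨i, hik, hi⟩ => (abs_lt_dyadicR_iff hi k).not.2 hik,
    fun h => ⟨j, (abs_lt_dyadicR_iff hj k).not.1 h, hj⟩⟩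

variable [MeasurableSpace α]

lemma measurableSet_dyadicShell {a : α → ℝ} (ha : Measurable a) (k : ℕ) :
    MeasurableSet (dyadicShell a k) :=
  (measurableSet_le measurable_const ha.abs).inter (measurableSet_lt ha.abs measurable_const)

end DyadicShell

lemma ENNReal.rpow_inv_two_tsum_le {ι : Type*} (x : ι → ℝ≥0∞) :
    (∑' i, x i) ^ (2⁻¹ : ℝ) ≤ ∑' i, x i ^ (2⁻¹ : ℝ) := by
  have hsq : ∑' i, x i ≤ (∑' i, x i ^ (2⁻¹ : ℝ)) ^ 2 :=
    calc ∑' i, x i = ∑' i, x i ^ (2⁻¹ : ℝ) * x i ^ (2⁻¹ : ℝ) := by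
          simp_rw [← sq]; exact tsum_congr fun i => by
            simpa using (ENNReal.rpow_inv_natCast_pow two_ne_zero (x i)).symm
      _ ≤ ∑' i, x i ^ (2⁻¹ : ℝ) * ∑' j, x j ^ (2⁻¹ : ℝ) := by
          gcongr with i; exact ENNReal.le_tsum i
      _ = (∑' i, x i ^ (2⁻¹ : ℝ)) ^ 2 := by rw [ENNReal.tsum_mul_right, sq]
  calc (∑' i, x i) ^ (2⁻¹ : ℝ) ≤ ((∑' i, x i ^ (2⁻¹ : ℝ)) ^ 2) ^ (2⁻¹ : ℝ) := by gcongr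
    _ = ∑' i, x i ^ (2⁻¹ : ℝ) := by simpa using ENNReal.pow_rpow_inv_natCast two_ne_zero _

lemma eLpNorm_two_indicator_iUnion_le {α ι E : Type*} [MeasurableSpace α] [Countable ι]
    [NormedAddCommGroup E] {μ : Measure α} {S : ι → Set α} (hS : ∀ i, MeasurableSet (S i))
    (f : α → E) :
    eLpNorm ((⋃ i, S i).indicator f) 2 μ ≤ ∑' i, eLpNorm ((S i).indicator f) 2 μ := by
  simp only [eLpNorm_indicator_eq_eLpNorm_restrict (MeasurableSet.iUnion hS),
    eLpNorm_indicator_eq_eLpNorm_restrict (hS _),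
    eLpNorm_eq_lintegral_rpow_enorm_toReal two_ne_zero ENNReal.ofNat_ne_top,
    ENNReal.toReal_ofNat, one_div]
  calc (∫⁻ x in ⋃ i, S i, ‖f x‖ₑ ^ (2 : ℝ) ∂μ) ^ (2⁻¹ : ℝ)
      ≤ (∑' i, ∫⁻ x in S i, ‖f x‖ₑ ^ (2 : ℝ) ∂μ) ^ (2⁻¹ : ℝ) := by
        gcongr; exact lintegral_iUnion_le _ _
    _ ≤ _ := ENNReal.rpow_inv_two_tsum_le _

lemma two_rpow_le_rpow_sq_add_one {s t : ℝ} (hs : 0 ≤ s) {k : ℕ} (ht : dyadicR k ≤ |t|) :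
    (2 : ℝ) ^ (((k : ℝ) - 1) * s) ≤ (t ^ 2 + 1) ^ (s / 2) := by
  rw [show ((k : ℝ) - 1) * s = 2 * ((k : ℝ) - 1) * (s / 2) by ring,
    Real.rpow_mul zero_le_two]
  gcongr
  cases k with
  | zero => norm_num; linarith [sq_nonneg t]
  | succ m =>
    rw [dyadicR_succ] at ht
    have : ((2 : ℝ) ^ m) ^ 2 ≤ t ^ 2 := by rw [← sq_abs t]; gcongr
    rw [show 2 * (((m + 1 : ℕ) : ℝ) - 1) = ((2 * m : ℕ) : ℝ) by push_cast; ring,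
      Real.rpow_natCast, pow_mul']
    linarith

lemma rpow_sq_add_one_le_two_rpow {s t : ℝ} (hs : 0 ≤ s) {j : ℕ} (ht : |t| < dyadicR (j + 1)) :
    (t ^ 2 + 1) ^ (s / 2) ≤ (2 : ℝ) ^ (((j : ℝ) + 1) * s) := by
  rw [show ((j : ℝ) + 1) * s = 2 * ((j : ℝ) + 1) * (s / 2) by ring,
    Real.rpow_mul zero_le_two]
  gcongr
  rw [dyadicR_succ] at ht
  have h1 : t ^ 2 ≤ ((2 : ℝ) ^ j) ^ 2 := by rw [← sq_abs t]; gcongr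
  have h2 : (1 : ℝ) ≤ (2 : ℝ) ^ j := one_le_pow₀ one_le_two
  rw [show 2 * ((j : ℝ) + 1) = ((2 * j + 2 : ℕ) : ℝ) by push_cast; ring, Real.rpow_natCast,
    pow_add, pow_mul']
  nlinarith

lemma ofReal_two_rpow (x : ℝ) : ENNReal.ofReal ((2 : ℝ) ^ x) = (2 : ℝ≥0∞) ^ x := by
  rw [← ENNReal.ofReal_rpow_of_pos two_pos, ENNReal.ofReal_ofNat]

section Blocks

variable {α : Type*} [MeasurableSpace α] {μ : Measure α}

/-- `⟨a⟩ ^ s • f`, with `⟨t⟩ = (t ^ 2 + 1) ^ (1 / 2)`. -/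
def bracketSMul (a : α → ℝ) (s : ℝ) (f : α → ℂ) : α → ℂ :=
  fun x => ((a x ^ 2 + 1) ^ (s / 2) : ℝ) • f x

lemma blockE_eq (a : α → ℝ) (f : α → ℂ) :
    blockE μ a f = fun k => eLpNorm ((dyadicShell a k).indicator f) 2 μ :=
  rfl

lemma blockE_le_two_rpow_mul_eLpNorm_bracketSMul {s : ℝ} (hs : 0 ≤ s) (a : α → ℝ)
    (f : α → ℂ) (k : ℕ) :
    blockE μ a f k ≤ (2 : ℝ≥0∞) ^ ((1 - (k : ℝ)) * s) * eLpNorm (bracketSMul a s f) 2 μ := by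
  rw [blockE_eq, ← ofReal_two_rpow, ← Real.enorm_of_nonneg (by positivity),
    ← eLpNorm_const_smul]
  refine eLpNorm_mono fun x => ?_
  by_cases hx : x ∈ dyadicShell a k
  · have hw : 1 ≤ (2 : ℝ) ^ ((1 - (k : ℝ)) * s) * (a x ^ 2 + 1) ^ (s / 2) :=
      calc (1 : ℝ) = (2 : ℝ) ^ ((1 - (k : ℝ)) * s) * (2 : ℝ) ^ (((k : ℝ) - 1) * s) := by
            rw [← Real.rpow_add two_pos]; ring_nf; exact Real.rpow_zero 2 |>.symm
        _ ≤ _ := by gcongr; exact two_rpow_le_rpow_sq_add_one hs hx.1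
    rw [Set.indicator_of_mem hx, Pi.smul_apply, bracketSMul, smul_smul,
      norm_smul, Real.norm_of_nonneg (by positivity)]
    exact le_mul_of_one_le_left (norm_nonneg _) hw
  · rw [Set.indicator_of_notMem hx, norm_zero]
    positivity

lemma blockE_bracketSMul_le {s : ℝ} (hs : 0 ≤ s) (a : α → ℝ) (f : α → ℂ) (j : ℕ) :
    blockE μ a (bracketSMul a s f) j ≤ (2 : ℝ≥0∞) ^ (((j : ℝ) + 1) * s) * blockE μ a f j := by
  rw [blockE_eq, blockE_eq, ← ofReal_two_rpow, ← Real.enorm_of_nonneg (by positivity),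
    ← eLpNorm_const_smul]
  refine eLpNorm_mono fun x => ?_
  by_cases hx : x ∈ dyadicShell a j
  · rw [Pi.smul_apply, Set.indicator_of_mem hx, Set.indicator_of_mem hx,
      bracketSMul, norm_smul, norm_smul, Real.norm_of_nonneg (by positivity),
      Real.norm_of_nonneg (by positivity)]
    gcongr
    exact rpow_sq_add_one_le_two_rpow hs hx.2
  · simp [Set.indicator_of_notMem hx]

lemma eLpNorm_indicator_biUnion_dyadicShell_le {a : α → ℝ} (ha : Measurable a) (J : Set ℕ)
    (f : α → ℂ) :
    eLpNorm ((⋃ j ∈ J, dyadicShell a j).indicator f) 2 μ ≤ ∑' j, J.indicator (blockE μ a f) j := by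
  rw [Set.biUnion_eq_iUnion, ← tsum_subtype, blockE_eq]
  exact eLpNorm_two_indicator_iUnion_le (S := fun j : J => dyadicShell a j)
    (fun j => measurableSet_dyadicShell ha j) f

lemma blockE_congr_ae {a : α → ℝ} {f g : α → ℂ} (h : f =ᵐ[μ] g) : blockE μ a f = blockE μ a g := by
  ext k
  exact eLpNorm_congr_ae (h.mono fun x hx => by simp only [Set.indicator_apply, hx])

lemma blockE_add_le {a : α → ℝ} (ha : Measurable a) {f g : α → ℂ}
    (hf : AEStronglyMeasurable f μ) (hg : AEStronglyMeasurable g μ) (k : ℕ) :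
    blockE μ a (f + g) k ≤ blockE μ a f k + blockE μ a g k := by
  rw [blockE_eq, blockE_eq, blockE_eq]
  dsimp only
  rw [Set.indicator_add']
  exact eLpNorm_add_le ((hf.indicator (measurableSet_dyadicShell ha k)))
    (hg.indicator (measurableSet_dyadicShell ha k)) one_le_two

end Blocks

/-- Bounds the `k`-th dyadic block of `T u` by the `j`-th block of `u` when `‖T‖ₑ ≤ M` and
`‖⟨a₂⟩ ^ s T ⟨a₁⟩ ^ (-s)‖ₑ ≤ N`. -/
def besovKernel (s : ℝ) (M N : ℝ≥0∞) (k j : ℕ) : ℝ≥0∞ :=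
  if j < k then N * 2 ^ ((1 - (k : ℝ)) * s) * 2 ^ (((j : ℝ) + 1) * s) else M

section Operator

variable {α₁ α₂ : Type*} [MeasurableSpace α₁] [MeasurableSpace α₂] {μ₁ : Measure α₁}
  {μ₂ : Measure α₂} {a₁ : α₁ → ℝ} {a₂ : α₂ → ℝ} (T : Lp ℂ 2 μ₁ →L[ℂ] Lp ℂ 2 μ₂)

lemma blockE_apply_le_of_ae_eq_indicator_compl (ha₁ : Measurable a₁) {u w : Lp ℂ 2 μ₁} {k : ℕ}
    (hw : (w : α₁ → ℂ) =ᵐ[μ₁] {x | |a₁ x| < dyadicR k}ᶜ.indicator u) :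
    blockE μ₂ a₂ (T w) k ≤ ‖T‖ₑ * ∑' j, (Set.Ici k).indicator (blockE μ₁ a₁ u) j :=
  calc blockE μ₂ a₂ (T w) k ≤ eLpNorm (T w) 2 μ₂ := eLpNorm_indicator_le _
    _ = ‖T w‖ₑ := (Lp.enorm_def _).symm
    _ ≤ ‖T‖ₑ * ‖w‖ₑ := T.le_opENorm w
    _ = ‖T‖ₑ * eLpNorm ((⋃ j ∈ Set.Ici k, dyadicShell a₁ j).indicator u) 2 μ₁ := by
        rw [Lp.enorm_def, eLpNorm_congr_ae hw, biUnion_Ici_dyadicShell]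
    _ ≤ _ := by gcongr; exact eLpNorm_indicator_biUnion_dyadicShell_le ha₁ _ _

lemma blockE_apply_le_of_ae_eq_indicator {s : ℝ} (hs : 0 ≤ s) {N : ℝ≥0∞} (ha₁ : Measurable a₁)
    (hN : ∀ u, eLpNorm (bracketSMul a₂ s (T u)) 2 μ₂ ≤ N * eLpNorm (bracketSMul a₁ s u) 2 μ₁)
    {u v : Lp ℂ 2 μ₁} {k : ℕ} (hv : (v : α₁ → ℂ) =ᵐ[μ₁] {x | |a₁ x| < dyadicR k}.indicator u) :
    blockE μ₂ a₂ (T v) k ≤ 2 ^ ((1 - (k : ℝ)) * s) *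
      (N * ∑' j, (Set.Iio k).indicator (fun j => 2 ^ (((j : ℝ) + 1) * s) * blockE μ₁ a₁ u j) j) := by
  have hbv : bracketSMul a₁ s v =ᵐ[μ₁]
      (⋃ j ∈ Set.Iio k, dyadicShell a₁ j).indicator (bracketSMul a₁ s u) := by
    rw [biUnion_Iio_dyadicShell]
    filter_upwards [hv] with x hx
    simp only [bracketSMul, hx, Set.indicator_apply]
    split_ifs <;> simp
  calc blockE μ₂ a₂ (T v) k
      ≤ 2 ^ ((1 - (k : ℝ)) * s) * eLpNorm (bracketSMul a₂ s (T v)) 2 μ₂ :=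
        blockE_le_two_rpow_mul_eLpNorm_bracketSMul hs _ _ _
    _ ≤ 2 ^ ((1 - (k : ℝ)) * s) * (N * eLpNorm ((⋃ j ∈ Set.Iio k, dyadicShell a₁ j).indicator
          (bracketSMul a₁ s u)) 2 μ₁) := by
        rw [← eLpNorm_congr_ae hbv]; gcongr; exact hN v
    _ ≤ _ := by
        gcongr
        refine (eLpNorm_indicator_biUnion_dyadicShell_le ha₁ _ _).trans
          (ENNReal.tsum_le_tsum fun j => ?_)
        by_cases hj : j ∈ Set.Iio k
        · simp only [Set.indicator_of_mem hj]; exact blockE_bracketSMul_le hs _ _ _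
        · simp [Set.indicator_of_notMem hj]

lemma blockE_apply_le_tsum_besovKernel {s : ℝ} (hs : 0 ≤ s) {N : ℝ≥0∞} (ha₁ : Measurable a₁)
    (ha₂ : Measurable a₂)
    (hN : ∀ u, eLpNorm (bracketSMul a₂ s (T u)) 2 μ₂ ≤ N * eLpNorm (bracketSMul a₁ s u) 2 μ₁)
    (u : Lp ℂ 2 μ₁) (k : ℕ) :
    blockE μ₂ a₂ (T u) k ≤ ∑' j, besovKernel s ‖T‖ₑ N k j * blockE μ₁ a₁ u j := by
  have hL : MeasurableSet {x | |a₁ x| < dyadicR k} := measurableSet_lt ha₁.abs measurable_const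
  have hv := (Lp.memLp u).indicator hL
  have hw := (Lp.memLp u).indicator hL.compl
  have hsplit : u = hv.toLp _ + hw.toLp _ := by
    ext : 1
    filter_upwards [Lp.coeFn_add (hv.toLp _) (hw.toLp _), hv.coeFn_toLp, hw.coeFn_toLp]
      with x h h₁ h₂
    rw [h, Pi.add_apply, h₁, h₂, ← Pi.add_apply, Set.indicator_self_add_compl]
  have hTu : (T u : α₂ → ℂ) =ᵐ[μ₂] ⇑(T (hv.toLp _)) + ⇑(T (hw.toLp _)) := by
    have := Lp.coeFn_add (T (hv.toLp _)) (T (hw.toLp _))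
    rwa [← map_add, ← hsplit] at this
  calc blockE μ₂ a₂ (T u) k
      ≤ blockE μ₂ a₂ (T (hv.toLp _)) k + blockE μ₂ a₂ (T (hw.toLp _)) k := by
        rw [blockE_congr_ae hTu]
        exact blockE_add_le ha₂ (Lp.aestronglyMeasurable _) (Lp.aestronglyMeasurable _) k
    _ ≤ 2 ^ ((1 - (k : ℝ)) * s) * (N * ∑' j, (Set.Iio k).indicator
            (fun j => 2 ^ (((j : ℝ) + 1) * s) * blockE μ₁ a₁ u j) j) +
          ‖T‖ₑ * ∑' j, (Set.Ici k).indicator (blockE μ₁ a₁ u) j :=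
        add_le_add (blockE_apply_le_of_ae_eq_indicator T hs ha₁ hN hv.coeFn_toLp)
          (blockE_apply_le_of_ae_eq_indicator_compl T ha₁ hw.coeFn_toLp)
    _ = ∑' j, besovKernel s ‖T‖ₑ N k j * blockE μ₁ a₁ u j := by
        simp only [← ENNReal.tsum_mul_left, ← ENNReal.tsum_add]
        refine tsum_congr fun j => ?_
        by_cases hj : j < k
        · simp [besovKernel, hj]; ring
        · simp [besovKernel, hj, Set.indicator_of_mem (Set.mem_Ici.2 (not_lt.1 hj))]

end Operator

lemma sum_range_succ_two_rpow_half_le (j : ℕ) :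
    ∑ k ∈ Finset.range (j + 1), (2 : ℝ≥0∞) ^ ((k : ℝ) / 2)
      ≤ (1 - 2 ^ (-2⁻¹ : ℝ))⁻¹ * 2 ^ ((j : ℝ) / 2) := by
  rw [← Finset.sum_range_reflect, ← ENNReal.tsum_geometric]
  calc ∑ i ∈ Finset.range (j + 1), (2 : ℝ≥0∞) ^ (((j + 1 - 1 - i : ℕ) : ℝ) / 2)
      = ∑ i ∈ Finset.range (j + 1), (2 ^ (-2⁻¹ : ℝ)) ^ i * (2 : ℝ≥0∞) ^ ((j : ℝ) / 2) := by
        refine Finset.sum_congr rfl fun i hi => ?_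
        have hij : i ≤ j := Nat.lt_succ_iff.1 (Finset.mem_range.1 hi)
        rw [← ENNReal.rpow_natCast, ← ENNReal.rpow_mul,
          ← ENNReal.rpow_add _ _ two_ne_zero ENNReal.ofNat_ne_top, Nat.add_sub_cancel,
          Nat.cast_sub hij]
        ring_nf
    _ ≤ _ := by rw [← Finset.sum_mul]; gcongr; exact ENNReal.sum_le_tsum _

lemma tsum_two_rpow_mul_besovKernel_nat_add (s : ℝ) (M N : ℝ≥0∞) (j : ℕ) :
    ∑' i, (2 : ℝ≥0∞) ^ (((i + (j + 1) : ℕ) : ℝ) / 2) * besovKernel s M N (i + (j + 1)) j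
      = N * (2 ^ (2⁻¹ + s) * (1 - 2 ^ (2⁻¹ - s))⁻¹) * 2 ^ ((j : ℝ) / 2) := by
  rw [← ENNReal.tsum_geometric, ← ENNReal.tsum_mul_left, ← ENNReal.tsum_mul_left,
    ← ENNReal.tsum_mul_right]
  refine tsum_congr fun i => ?_
  have h2 : ∀ x y : ℝ, (2 : ℝ≥0∞) ^ x * 2 ^ y = 2 ^ (x + y) := fun x y =>
    (ENNReal.rpow_add _ _ two_ne_zero ENNReal.ofNat_ne_top).symm
  rw [besovKernel, if_pos (by omega), ← ENNReal.rpow_natCast, ← ENNReal.rpow_mul, mul_comm,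
    mul_assoc N, mul_assoc N, mul_assoc N, h2, h2, h2, h2]
  congr 2
  push_cast
  ring

lemma tsum_two_rpow_mul_besovKernel_le (s : ℝ) (M N : ℝ≥0∞) (j : ℕ) :
    ∑' k : ℕ, (2 : ℝ≥0∞) ^ ((k : ℝ) / 2) * besovKernel s M N k j
      ≤ (M * (1 - 2 ^ (-2⁻¹ : ℝ))⁻¹ + N * (2 ^ (2⁻¹ + s) * (1 - 2 ^ (2⁻¹ - s))⁻¹))
        * 2 ^ ((j : ℝ) / 2) := by
  rw [← ENNReal.summable.sum_add_tsum_nat_add' (k := j + 1),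
    tsum_two_rpow_mul_besovKernel_nat_add, add_mul]
  gcongr
  rw [Finset.sum_congr rfl fun k hk => by
      rw [besovKernel, if_neg (by simp only [Finset.mem_range] at hk; omega)],
    ← Finset.sum_mul, mul_comm _ M, mul_assoc]
  exact mul_le_mul_right (sum_range_succ_two_rpow_half_le j) M

lemma ENNReal.tsum_mul_le_of_le_tsum_mul {ι κ : Type*} {w : κ → ℝ≥0∞} {v b : ι → ℝ≥0∞}
    {c : κ → ℝ≥0∞} {K : κ → ι → ℝ≥0∞} {C : ℝ≥0∞} (hc : ∀ k, c k ≤ ∑' j, K k j * b j)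
    (hK : ∀ j, ∑' k, w k * K k j ≤ C * v j) :
    ∑' k, w k * c k ≤ C * ∑' j, v j * b j :=
  calc ∑' k, w k * c k ≤ ∑' k, w k * ∑' j, K k j * b j := by gcongr with k; exact hc k
    _ = ∑' j, (∑' k, w k * K k j) * b j := by
        simp_rw [← ENNReal.tsum_mul_left, ← ENNReal.tsum_mul_right, mul_assoc]
        exact ENNReal.tsum_comm
    _ ≤ ∑' j, C * v j * b j := by gcongr with j; exact hK j
    _ = C * ∑' j, v j * b j := by simp_rw [mul_assoc, ENNReal.tsum_mul_left]

lemma besovE_eq_tsum {α : Type*} [MeasurableSpace α] (μ : Measure α) (a : α → ℝ) (u : α → ℂ) :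
    besovE μ a u = ∑' k : ℕ, (2 : ℝ≥0∞) ^ ((k : ℝ) / 2) * blockE μ a u k := by
  simp only [besovE, ofReal_sqrt_dyadicR_succ]

/-- interpolation-type lemma. For `s > 1/2` there is `C = C(s) > 0`,
independent of `T` (and of the operators `A₁, A₂`, modelled up to unitary equivalence
as multiplication by measurable functions `aᵢ` on `L²(μᵢ)`): if `T : H₁ → H₂` is a
bounded operator and `⟨A₂⟩^s T ⟨A₁⟩^{-s}` is bounded with norm `≤ N`, i.e.
`‖⟨A₂⟩^s T u‖ ≤ N ‖⟨A₁⟩^s u‖` for all `u`, then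
`‖T u‖_{B(A₂)} ≤ C (‖T‖ + N) ‖u‖_{B(A₁)}` for all `u ∈ B(A₁) ⊆ H₁`. -/
theorem stmt8 (s : ℝ) (hs : 1 / 2 < s) :
    ∃ C > (0 : ℝ), ∀ (α₁ α₂ : Type) (_ : MeasurableSpace α₁) (_ : MeasurableSpace α₂)
      (μ₁ : Measure α₁) (μ₂ : Measure α₂) (a₁ : α₁ → ℝ) (a₂ : α₂ → ℝ),
      Measurable a₁ → Measurable a₂ →
      ∀ (T : Lp ℂ 2 μ₁ →L[ℂ] Lp ℂ 2 μ₂) (N : ℝ),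
        (∀ u : Lp ℂ 2 μ₁,
          eLpNorm (fun x => ((a₂ x ^ 2 + 1) ^ (s / 2) : ℝ) • (T u : α₂ → ℂ) x) 2 μ₂ ≤
            ENNReal.ofReal N *
              eLpNorm (fun x => ((a₁ x ^ 2 + 1) ^ (s / 2) : ℝ) • (u : α₁ → ℂ) x) 2 μ₁) →
        ∀ u : Lp ℂ 2 μ₁,
          besovE μ₂ a₂ (T u) ≤ ENNReal.ofReal (C * (‖T‖ + N)) * besovE μ₁ a₁ u := by
  have hs0 : 0 ≤ s := by linarith
  set A : ℝ≥0∞ := (1 - 2 ^ (-2⁻¹ : ℝ))⁻¹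
  set B : ℝ≥0∞ := 2 ^ (2⁻¹ + s) * (1 - 2 ^ (2⁻¹ - s))⁻¹
  have hq {x : ℝ} (hx : x < 0) : (1 - (2 : ℝ≥0∞) ^ x)⁻¹ ≠ ⊤ :=
    ENNReal.inv_ne_top.2 <| tsub_eq_zero_iff_le.not.2
      (ENNReal.rpow_lt_one_of_one_lt_of_neg ENNReal.one_lt_two hx).not_ge
  have hA : A ≠ ⊤ := hq (by norm_num)
  have hB : B ≠ ⊤ := ENNReal.mul_ne_top
    (ENNReal.rpow_ne_top_of_nonneg (by positivity) ENNReal.ofNat_ne_top) (hq (by linarith))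
  have hAB : A + B ≠ ⊤ := ENNReal.add_ne_top.2 ⟨hA, hB⟩
  have hA0 : A ≠ 0 := ENNReal.inv_ne_zero.2 (ENNReal.sub_ne_top ENNReal.one_ne_top)
  refine ⟨(A + B).toReal, ENNReal.toReal_pos (by simp [hA0]) hAB, ?_⟩
  intro α₁ α₂ _ _ μ₁ μ₂ a₁ a₂ ha₁ ha₂ T N hN u
  rcases lt_or_ge N 0 with hN0 | hN0
  · have hblock (k : ℕ) : blockE μ₂ a₂ (T u) k = 0 := by
      refine le_antisymm ((blockE_le_two_rpow_mul_eLpNorm_bracketSMul hs0 a₂ _ k).trans ?_) bot_le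
      grw [show eLpNorm (bracketSMul a₂ s (T u)) 2 μ₂ ≤ _ from hN u,
        ENNReal.ofReal_of_nonpos hN0.le]
      simp
    simp [besovE_eq_tsum, hblock]
  calc besovE μ₂ a₂ (T u) ≤ (‖T‖ₑ * A + ENNReal.ofReal N * B) * besovE μ₁ a₁ u := by
        simp only [besovE_eq_tsum]
        exact ENNReal.tsum_mul_le_of_le_tsum_mul
          (blockE_apply_le_tsum_besovKernel T hs0 ha₁ ha₂ hN u)
          (tsum_two_rpow_mul_besovKernel_le s _ _)
    _ ≤ ENNReal.ofReal ((A + B).toReal * (‖T‖ + N)) * besovE μ₁ a₁ u := by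
        rw [ENNReal.ofReal_mul ENNReal.toReal_nonneg, ENNReal.ofReal_toReal hAB,
          ENNReal.ofReal_add (norm_nonneg _) hN0, ofReal_norm]
        gcongr
        calc ‖T‖ₑ * A + ENNReal.ofReal N * B
            ≤ ‖T‖ₑ * (A + B) + ENNReal.ofReal N * (A + B) := by gcongr <;> simp
          _ = (A + B) * (‖T‖ₑ + ENNReal.ofReal N) := by ring
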